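/- Let 𝔸 = (a₁,…,a_m) and 𝔹 = (b₁,…,b_n) be alphabets of variables, and let I = (i₁,…,i_m) and J = (j₁,…,j_h) be partitions. Then the supersymmetric Schur function indexed by the partition (j₁,…,j_h, i₁+n,…,i_m+n) factorizes: S_{(j₁,…,j_h,i₁+n,…,i_m+n)}(𝔸−𝔹) = S_I(𝔸) · R(𝔸,𝔹) · S_J(−𝔹), where R(𝔸,𝔹) = Π_{a∈𝔸,b∈𝔹}(a−b). -/

import Mathlib

open PowerSeries MvPolynomial

/-- `Π_{m ∈ M} (1 − m·z)`. -/
noncomputable def prodOneSub {R : Type*} [CommRing R] (M : Multiset R) : PowerSeries R :=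
  (M.map fun m => (1 : PowerSeries R) - PowerSeries.C m * PowerSeries.X).prod

/-- The supersymmetric complete function `h_k(𝔸−𝔹)`, the `k`-th coefficient of
`Π_{b∈𝔹}(1−bz) / Π_{a∈𝔸}(1−az)`. -/
noncomputable def hAB {R : Type*} [CommRing R] (A B : Multiset R) (k : ℕ) : R :=
  PowerSeries.coeff k (prodOneSub B * (prodOneSub A).invOfUnit 1)

/-- `h_k(𝔸−𝔹)` extended by `0` to negative integer indices. -/
noncomputable def hABz {R : Type*} [CommRing R] (A B : Multiset R) (k : ℤ) : R :=
  if k < 0 then 0 else hAB A B k.toNat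

/-- The supersymmetric Schur function `S_I(𝔸−𝔹) = det( h_{i_p+p−q}(𝔸−𝔹) )_{1≤p,q≤h}`,
for a partition `I` with `h` parts (written in weakly increasing order). -/
noncomputable def schurAB {R : Type*} [CommRing R] (A B : Multiset R) {h : ℕ}
    (I : Fin h → ℕ) : R :=
  Matrix.det (Matrix.of fun p q : Fin h =>
    hABz A B ((I p : ℤ) + (p : ℕ) - (q : ℕ)))

/-!
Write `E_𝔸(z) = Π_{a∈𝔸}(1 − az)`, so that `h_k(𝔸 − 𝔹)` are the coefficients of `E_𝔹 / E_𝔸`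
and `h_k(−ℂ)` those of the polynomial `E_ℂ`. Multiplying a Jacobi–Trudi matrix on the right by
columns of shifted coefficients of `E_ℂ` turns entries `h(𝔸 − 𝔹)` into `h(𝔸 − 𝔹 − ℂ)`.

Taking `ℂ = 𝔸` in the first `h` columns (a unitriangular factor), the matrix of
`(J, I + n)` becomes block triangular, because `h_k(−𝔹) = 0` for `k > n`; hence
`S_{(J, I+n)}(𝔸 − 𝔹) = S_J(−𝔹) · S_{I+n}(𝔸 − 𝔹)`. Multiplying the matrix of `(0ⁿ, I)` in `𝔸` by
`n` columns of `E_𝔸` followed by `m` columns of `E_𝔹` gives `S_I(𝔸) · det W = S_{I+n}(𝔸 − 𝔹)`,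
and `W` is the Sylvester matrix of `Π(x − a)` and `Π(x − b)` read backwards, so
`det W = R(𝔸, 𝔹)`.
-/

section

variable {R : Type*} [CommRing R]

namespace PowerSeries

noncomputable def coeffInt (f : R⟦X⟧) (k : ℤ) : R :=
  if k < 0 then 0 else coeff k.toNat f

lemma coeffInt_of_neg (f : R⟦X⟧) {k : ℤ} (hk : k < 0) : coeffInt f k = 0 := if_pos hk

@[simp] lemma coeffInt_natCast (f : R⟦X⟧) (k : ℕ) : coeffInt f k = coeff k f := by
  simp [coeffInt]

lemma coeffInt_sub_natCast (f : R⟦X⟧) {k j : ℕ} (h : j ≤ k) :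
    coeffInt f ((k : ℤ) - j) = coeff (k - j) f := by
  rw [← Nat.cast_sub h, coeffInt_natCast]

lemma coeffInt_mul_eq_sum (f g : R⟦X⟧) {d : ℕ} (hg : ∀ j, d < j → coeff j g = 0) (K : ℤ) :
    coeffInt (f * g) K = ∑ j ∈ Finset.range (d + 1), coeffInt f (K - j) * coeff j g := by
  rcases lt_or_ge K 0 with hK | hK
  · rw [coeffInt_of_neg _ hK]
    exact (Finset.sum_eq_zero fun j _ => by rw [coeffInt_of_neg _ (by omega), zero_mul]).symm
  lift K to ℕ using hK with k
  have hf : ∀ j ∈ Finset.range (k + d + 1), j ∉ Finset.range (k + 1) →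
      coeffInt f (k - j) * coeff j g = 0 := fun j _ hj => by
    rw [coeffInt_of_neg _ (by rw [Finset.mem_range] at hj; omega), zero_mul]
  have hg' : ∀ j ∈ Finset.range (k + d + 1), j ∉ Finset.range (d + 1) →
      coeffInt f (k - j) * coeff j g = 0 := fun j _ hj => by
    rw [hg j (by rw [Finset.mem_range] at hj; omega), mul_zero]
  rw [coeffInt_natCast, mul_comm, coeff_mul, Finset.Nat.sum_antidiagonal_eq_sum_range_succ
      (fun i j => coeff i g * coeff j f), Finset.sum_subset (by simp) hg',
    ← Finset.sum_subset (by simp) hf]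
  refine Finset.sum_congr rfl fun j hj => ?_
  rw [coeffInt_sub_natCast _ (Nat.le_of_lt_succ (Finset.mem_range.mp hj)), mul_comm]

lemma sum_coeffInt_mul_coeffInt (f g : R⟦X⟧) {d : ℕ} (hg : ∀ j, d < j → coeff j g = 0)
    {N q : ℕ} (hN : q + d < N) (k : ℤ) :
    ∑ r ∈ Finset.range N, coeffInt f (k - r) * coeffInt g (r - q) = coeffInt (f * g) (k - q) := by
  have hvanish : ∀ r ∈ Finset.range N, r ∉ Finset.Ico q (q + (d + 1)) →
      coeffInt f (k - r) * coeffInt g (r - q) = 0 := fun r _ hr => by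
    simp only [Finset.mem_Ico, not_and_or, not_le, not_lt] at hr
    rcases hr with hr | hr
    · rw [coeffInt_of_neg g (by omega), mul_zero]
    · rw [coeffInt_sub_natCast g (by omega), hg _ (by omega), mul_zero]
  have hsub : Finset.Ico q (q + (d + 1)) ⊆ Finset.range N := fun r hr => by
    simp only [Finset.mem_Ico, Finset.mem_range] at hr ⊢
    omega
  rw [← Finset.sum_subset hsub hvanish, Finset.sum_Ico_eq_sum_range, Nat.add_sub_cancel_left, coeffInt_mul_eq_sum f g hg]
  refine Finset.sum_congr rfl fun j _ => ?_
  push_cast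
  rw [add_sub_cancel_left, coeffInt_natCast, sub_add_eq_sub_sub]

end PowerSeries

@[simp] lemma constantCoeff_prodOneSub (A : Multiset R) : constantCoeff (prodOneSub A) = 1 := by
  simp [prodOneSub, map_multiset_prod]

@[simp] lemma prodOneSub_zero : prodOneSub (0 : Multiset R) = 1 := by
  simp [prodOneSub]

lemma prodOneSub_add (A B : Multiset R) : prodOneSub (A + B) = prodOneSub A * prodOneSub B := by
  simp [prodOneSub]

lemma prodOneSub_cons (a : R) (A : Multiset R) :
    prodOneSub (a ::ₘ A) = (1 - PowerSeries.C a * PowerSeries.X) * prodOneSub A := by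
  simp [prodOneSub]

lemma prodOneSub_mul_invOfUnit (A : Multiset R) : prodOneSub A * (prodOneSub A).invOfUnit 1 = 1 :=
  mul_invOfUnit _ 1 (by simp)

lemma coeff_prodOneSub_of_card_lt (A : Multiset R) {k : ℕ} (hk : Multiset.card A < k) :
    coeff k (prodOneSub A) = 0 := by
  induction A using Multiset.induction generalizing k with
  | empty => simp [PowerSeries.coeff_one, Nat.pos_iff_ne_zero.mp (by simpa using hk)]
  | cons a A ih =>
    rw [Multiset.card_cons] at hk
    obtain ⟨k, rfl⟩ : ∃ k', k = k' + 1 := ⟨k - 1, by omega⟩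
    rw [prodOneSub_cons, sub_mul, one_mul, map_sub, mul_assoc, PowerSeries.coeff_C_mul,
      coeff_succ_X_mul, ih (by omega), ih (by omega), mul_zero, sub_zero]

lemma hABz_eq_coeffInt (A B : Multiset R) :
    hABz A B = coeffInt (prodOneSub B * (prodOneSub A).invOfUnit 1) := rfl

lemma hABz_of_neg (A B : Multiset R) {k : ℤ} (hk : k < 0) : hABz A B k = 0 := if_pos hk

@[simp] lemma hABz_zero (A B : Multiset R) : hABz A B 0 = 1 := by
  rw [hABz_eq_coeffInt, ← Nat.cast_zero, coeffInt_natCast, coeff_zero_eq_constantCoeff_apply,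
    map_mul, constantCoeff_prodOneSub, constantCoeff_invOfUnit, one_mul, inv_one, Units.val_one]

lemma hABz_zero_left (B : Multiset R) : hABz 0 B = coeffInt (prodOneSub B) := by
  have h1 : (prodOneSub (0 : Multiset R)).invOfUnit 1 = 1 := by
    simpa using prodOneSub_mul_invOfUnit (0 : Multiset R)
  rw [hABz_eq_coeffInt, h1, mul_one]

lemma hABz_zero_left_of_card_lt (B : Multiset R) {k : ℤ} (hk : (Multiset.card B : ℤ) < k) :
    hABz 0 B k = 0 := by
  rw [hABz_zero_left, ← Int.toNat_of_nonneg (by omega : 0 ≤ k), coeffInt_natCast,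
    coeff_prodOneSub_of_card_lt B (by omega)]

lemma hABz_zero_zero (k : ℤ) : hABz (0 : Multiset R) 0 k = if k = 0 then 1 else 0 := by
  rcases lt_trichotomy k 0 with hk | rfl | hk
  · rw [hABz_of_neg _ _ hk, if_neg hk.ne]
  · simp
  · rw [hABz_zero_left_of_card_lt _ (by simpa using hk), if_neg hk.ne']

lemma hABz_add_self_right (A B : Multiset R) : hABz A (B + A) = hABz 0 B := by
  rw [hABz_eq_coeffInt, hABz_zero_left, prodOneSub_add, mul_assoc, prodOneSub_mul_invOfUnit,
    mul_one]

/-- Coefficients of `(E_𝔹 / E_𝔸) · E_ℂ = E_{𝔹+ℂ} / E_𝔸`; the bound on `N` makes the truncated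
sum the whole convolution. -/
lemma sum_hABz_mul_hABz_zero_left (A B C : Multiset R) {N q : ℕ}
    (hN : q + Multiset.card C < N) (k : ℤ) :
    ∑ r ∈ Finset.range N, hABz A B (k - r) * hABz 0 C (r - q) = hABz A (B + C) (k - q) := by
  rw [hABz_zero_left, hABz_eq_coeffInt, hABz_eq_coeffInt,
    sum_coeffInt_mul_coeffInt _ _ (fun j => coeff_prodOneSub_of_card_lt C) hN, prodOneSub_add]
  ring_nf

namespace Matrix

lemma det_eq_mul_of_lowerLeft_eq_zero {a b : ℕ} (M : Matrix (Fin (a + b)) (Fin (a + b)) R)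
    (h : ∀ i j, M (Fin.natAdd a i) (Fin.castAdd b j) = 0) :
    M.det = (M.submatrix (Fin.castAdd b) (Fin.castAdd b)).det *
      (M.submatrix (Fin.natAdd a) (Fin.natAdd a)).det := by
  rw [← det_submatrix_equiv_self finSumFinEquiv,
    ← det_fromBlocks_zero₂₁ _ (M.submatrix (Fin.castAdd b) (Fin.natAdd a))]
  congr 1
  ext (i | i) (j | j) <;> simp [h]

lemma det_eq_mul_of_upperRight_eq_zero {a b : ℕ} (M : Matrix (Fin (a + b)) (Fin (a + b)) R)
    (h : ∀ i j, M (Fin.castAdd b i) (Fin.natAdd a j) = 0) :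
    M.det = (M.submatrix (Fin.castAdd b) (Fin.castAdd b)).det *
      (M.submatrix (Fin.natAdd a) (Fin.natAdd a)).det := by
  rw [← det_transpose M, det_eq_mul_of_lowerLeft_eq_zero _ fun i j => h j i]
  simp only [← transpose_submatrix, det_transpose]

lemma det_eq_one_of_lowerUnitriangular {n : Type*} [Fintype n] [LinearOrder n]
    (M : Matrix n n R) (h0 : ∀ i j, i < j → M i j = 0) (h1 : ∀ i, M i i = 1) : M.det = 1 := by
  rw [det_of_isLowerTriangular M h0]
  exact Finset.prod_eq_one fun i _ => h1 i

end Matrix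

noncomputable def jacobiTrudi (A B : Multiset R) {N : ℕ} (K : Fin N → ℕ) :
    Matrix (Fin N) (Fin N) R :=
  .of fun p q => hABz A B ((K p : ℤ) + (p : ℕ) - (q : ℕ))

lemma schurAB_eq_det (A B : Multiset R) {N : ℕ} (K : Fin N → ℕ) :
    schurAB A B K = (jacobiTrudi A B K).det := rfl

/-- A Sylvester-type matrix: column `q < a` holds the coefficients of `E_ℂ` shifted down by `q`,
column `a + q` those of `E_𝔻` shifted down by `s + q`. -/
noncomputable def eMatrix (C D : Multiset R) (s : ℕ) {a b : ℕ} :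
    Matrix (Fin (a + b)) (Fin (a + b)) R :=
  .of fun r c => Fin.addCases (fun q : Fin a => hABz 0 C ((r : ℕ) - (q : ℕ)))
    (fun q : Fin b => hABz 0 D ((r : ℕ) - (s + q : ℕ))) c

lemma jacobiTrudi_mul_eMatrix_apply (A B C D : Multiset R) (s : ℕ) {a b : ℕ}
    (K : Fin (a + b) → ℕ) (hC : Multiset.card C ≤ b) (hD : s + Multiset.card D ≤ a)
    (p c : Fin (a + b)) :
    (jacobiTrudi A B K * eMatrix C D s : Matrix (Fin (a + b)) (Fin (a + b)) R) p c = Fin.addCases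
      (fun q : Fin a => hABz A (B + C) ((K p : ℤ) + (p : ℕ) - (q : ℕ)))
      (fun q : Fin b => hABz A (B + D) ((K p : ℤ) + (p : ℕ) - (s + q : ℕ))) c := by
  rw [Matrix.mul_apply]
  induction c using Fin.addCases with
  | left q =>
    simp only [jacobiTrudi, eMatrix, Matrix.of_apply, Fin.addCases_left]
    rw [Fin.sum_univ_eq_sum_range (fun r => hABz A B (_ - r) * hABz 0 C (r - q)),
      sum_hABz_mul_hABz_zero_left _ _ _ (by omega)]
  | right q =>
    simp only [jacobiTrudi, eMatrix, Matrix.of_apply, Fin.addCases_right]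
    rw [Fin.sum_univ_eq_sum_range (fun r => hABz A B (_ - r) * hABz 0 D (r - (s + q : ℕ))),
      sum_hABz_mul_hABz_zero_left _ _ _ (by omega)]

@[simp] lemma schurAB_zero_partition (A B : Multiset R) (a : ℕ) :
    schurAB A B (0 : Fin a → ℕ) = 1 :=
  Matrix.det_eq_one_of_lowerUnitriangular _
    (fun i j hij => hABz_of_neg _ _ (by simpa using hij))
    (fun i => by simp)

lemma schurAB_zero_append (A B : Multiset R) {a m : ℕ} (I : Fin m → ℕ) :
    schurAB A B (Fin.append (0 : Fin a → ℕ) I) = schurAB A B I := by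
  have hUL : (jacobiTrudi A B (Fin.append (0 : Fin a → ℕ) I)).submatrix
      (Fin.castAdd m) (Fin.castAdd m) = jacobiTrudi A B 0 := by
    ext i j; simp [jacobiTrudi]
  have hLR : (jacobiTrudi A B (Fin.append (0 : Fin a → ℕ) I)).submatrix
      (Fin.natAdd a) (Fin.natAdd a) = jacobiTrudi A B I := by
    ext i j
    simp only [jacobiTrudi, Matrix.submatrix_apply, Matrix.of_apply, Fin.append_right,
      Fin.val_natAdd, Nat.cast_add]
    congr 1
    ring
  rw [schurAB_eq_det, Matrix.det_eq_mul_of_upperRight_eq_zero _ ?_, hUL, hLR, ← schurAB_eq_det,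
    ← schurAB_eq_det, schurAB_zero_partition, one_mul]
  intro i j
  refine hABz_of_neg _ _ ?_
  simp only [Fin.append_left, Pi.zero_apply, Fin.val_castAdd, Fin.val_natAdd]
  omega

lemma det_eMatrix_zero_right (C : Multiset R) {a b : ℕ} :
    (eMatrix C 0 a : Matrix (Fin (a + b)) (Fin (a + b)) R).det = 1 := by
  refine Matrix.det_eq_one_of_lowerUnitriangular _ (fun r c hrc => ?_) (fun r => ?_)
  · induction c using Fin.addCases with
    | left q =>
      rw [Fin.lt_def, Fin.val_castAdd] at hrc
      simp only [eMatrix, Matrix.of_apply, Fin.addCases_left]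
      exact hABz_of_neg _ _ (by omega)
    | right q =>
      rw [Fin.lt_def, Fin.val_natAdd] at hrc
      simp only [eMatrix, Matrix.of_apply, Fin.addCases_right]
      exact hABz_of_neg _ _ (by omega)
  · induction r using Fin.addCases with
    | left q => simp [eMatrix]
    | right q => simp [eMatrix]

lemma schurAB_append_add_eq_mul (A B : Multiset R) {m n h : ℕ} (hA : Multiset.card A ≤ m)
    (hB : Multiset.card B ≤ n) (I : Fin m → ℕ) (J : Fin h → ℕ) :
    schurAB A B (Fin.append J fun i => I i + n) =
      schurAB 0 B J * schurAB A B (fun i => I i + n) := by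
  set K : Fin (h + m) → ℕ := Fin.append J fun i => I i + n
  have hprod := jacobiTrudi_mul_eMatrix_apply A B A 0 h K hA (by simp)
  simp only [hABz_add_self_right, add_zero] at hprod
  calc schurAB A B K
      = (jacobiTrudi A B K * eMatrix A 0 h).det := by
        rw [Matrix.det_mul, det_eMatrix_zero_right, mul_one, schurAB_eq_det]
    _ = _ := Matrix.det_eq_mul_of_lowerLeft_eq_zero _ fun i j => by
        rw [hprod, Fin.addCases_left]
        refine hABz_zero_left_of_card_lt _ ?_
        simp only [K, Fin.append_right, Fin.val_natAdd]
        omega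
    _ = _ := by
        rw [schurAB_eq_det, schurAB_eq_det]
        congr 1 <;> congr 1 <;> ext p q
        · rw [Matrix.submatrix_apply, hprod]
          simp [K, jacobiTrudi]
        · rw [Matrix.submatrix_apply, hprod]
          simp only [K, jacobiTrudi, Matrix.of_apply, Fin.append_right, Fin.val_natAdd,
            Nat.cast_add, Fin.addCases_right]
          congr 1
          ring

lemma schurAB_zero_right_mul_det_eMatrix (A B : Multiset R) {m n : ℕ}
    (hA : Multiset.card A ≤ m) (hB : Multiset.card B ≤ n) (I : Fin m → ℕ) :
    schurAB A 0 I * (eMatrix A B 0 : Matrix (Fin (n + m)) (Fin (n + m)) R).det =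
      schurAB A B (fun i => I i + n) := by
  set K : Fin (n + m) → ℕ := Fin.append (0 : Fin n → ℕ) I
  have hprod := jacobiTrudi_mul_eMatrix_apply A 0 A B 0 K hA (by simpa using hB)
  simp only [hABz_add_self_right, hABz_zero_zero] at hprod
  simp only [zero_add] at hprod
  calc schurAB A 0 I * (eMatrix A B 0 : Matrix (Fin (n + m)) (Fin (n + m)) R).det
      = (jacobiTrudi A 0 K * eMatrix A B 0).det := by
        rw [Matrix.det_mul, ← schurAB_eq_det, schurAB_zero_append]
    _ = _ := Matrix.det_eq_mul_of_lowerLeft_eq_zero _ fun i j => by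
        rw [hprod, Fin.addCases_left, if_neg]
        simp only [K, Fin.append_right, Fin.val_natAdd]
        omega
    _ = 1 * schurAB A B (fun i => I i + n) := by
        rw [schurAB_eq_det, ← Matrix.det_one (n := Fin n)]
        congr 1 <;> congr 1 <;> ext p q
        · rw [Matrix.submatrix_apply, hprod]
          simp [K, Matrix.one_apply, Fin.ext_iff, sub_eq_zero]
        · rw [Matrix.submatrix_apply, hprod]
          simp only [K, jacobiTrudi, Matrix.of_apply, Fin.append_right, Fin.val_natAdd,
            Nat.cast_add, Fin.addCases_right]
          congr 1
          ring
    _ = _ := one_mul _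

lemma prodOneSub_eq_coe_reflect (A : Multiset R) :
    prodOneSub A = ((A.map (Polynomial.X - Polynomial.C ·)).prod.reflect
      (Multiset.card A) : R⟦X⟧) := by
  induction A using Multiset.induction with
  | empty => simp [Polynomial.reflect_one]
  | cons a A ih =>
    have hdeg : (A.map (Polynomial.X - Polynomial.C ·)).prod.natDegree ≤ Multiset.card A := by
      nontriviality R
      exact (Polynomial.natDegree_multiset_prod_X_sub_C_eq_card A).le
    rw [prodOneSub_cons, ih, Multiset.map_cons, Multiset.prod_cons, Multiset.card_cons, add_comm,
      Polynomial.reflect_mul _ _ (Polynomial.natDegree_X_sub_C_le a) hdeg, Polynomial.reflect_sub,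
      Polynomial.reflect_C, Polynomial.reflect_one_X]
    simp

lemma hABz_zero_left_eq_coeff (A : Multiset R) (k : ℤ) :
    hABz 0 A k = if 0 ≤ k ∧ k ≤ Multiset.card A then
      (A.map (Polynomial.X - Polynomial.C ·)).prod.coeff (Multiset.card A - k).toNat else 0 := by
  rw [hABz_zero_left, coeffInt, prodOneSub_eq_coe_reflect, Polynomial.coeff_coe,
    Polynomial.coeff_reflect]
  split_ifs with h1 h2 h2
  · omega
  · rfl
  · rw [Polynomial.revAt_le (by omega)]
    congr 1
    omega
  · rw [Polynomial.revAt_eq_self_of_lt (by omega)]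
    nontriviality R
    exact Polynomial.coeff_eq_zero_of_natDegree_lt
      (by rw [Polynomial.natDegree_multiset_prod_X_sub_C_eq_card]; omega)

lemma eMatrix_eq_submatrix_sylvester (A B : Multiset R) {m n : ℕ} (hA : Multiset.card A = m)
    (hB : Multiset.card B = n) :
    (eMatrix A B 0 : Matrix (Fin (n + m)) (Fin (n + m)) R) =
      (Polynomial.sylvester (A.map (Polynomial.X - Polynomial.C ·)).prod
        (B.map (Polynomial.X - Polynomial.C ·)).prod m n).submatrix
        ((finCongr (add_comm n m)).trans Fin.revPerm)
        ((finCongr (add_comm n m)).trans Fin.revPerm) := by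
  subst hA hB
  ext r c
  have hr := r.isLt
  induction c using Fin.addCases with
  | left q =>
    have hq : ((finCongr (add_comm _ _)).trans Fin.revPerm) (Fin.castAdd _ q) =
        Fin.natAdd (Multiset.card A) q.rev := Fin.ext (by
      simp only [Equiv.trans_apply, finCongr_apply, Fin.revPerm_apply, Fin.val_rev, Fin.val_cast,
        Fin.val_castAdd, Fin.val_natAdd]
      omega)
    simp only [eMatrix, Matrix.of_apply, Fin.addCases_left, Matrix.submatrix_apply, hq,
      Polynomial.sylvester, Fin.addCases_right, hABz_zero_left_eq_coeff, Set.mem_Icc,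
      Equiv.trans_apply, finCongr_apply, Fin.revPerm_apply, Fin.val_rev, Fin.val_cast]
    split_ifs <;> first | omega | (congr 1 <;> omega)
  | right q =>
    have hq : ((finCongr (add_comm _ _)).trans Fin.revPerm) (Fin.natAdd _ q) =
        Fin.castAdd (Multiset.card B) q.rev := Fin.ext (by
      simp only [Equiv.trans_apply, finCongr_apply, Fin.revPerm_apply, Fin.val_rev, Fin.val_cast,
        Fin.val_castAdd, Fin.val_natAdd]
      omega)
    simp only [eMatrix, Matrix.of_apply, Fin.addCases_right, Matrix.submatrix_apply, hq,
      Polynomial.sylvester, Fin.addCases_left, hABz_zero_left_eq_coeff, Set.mem_Icc,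
      Equiv.trans_apply, finCongr_apply, Fin.revPerm_apply, Fin.val_rev, Fin.val_cast]
    split_ifs <;> first | omega | (congr 1 <;> omega)

lemma Polynomial.resultant_multiset_prod_X_sub_C_left (A : Multiset R) (g : Polynomial R) {n : ℕ}
    (hg : g.natDegree ≤ n) :
    (A.map (Polynomial.X - Polynomial.C ·)).prod.resultant g (Multiset.card A) n =
      (A.map g.eval).prod := by
  nontriviality R
  induction A using Multiset.induction with
  | empty => simp
  | cons a A ih =>
    have hcard : Multiset.card (a ::ₘ A) = (Polynomial.X - Polynomial.C a).natDegree +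
        (A.map (Polynomial.X - Polynomial.C ·)).prod.natDegree := by simp [add_comm]
    rw [Multiset.map_cons, Multiset.prod_cons, hcard, Polynomial.resultant_mul_left _ _ _ _ hg,
      Polynomial.natDegree_X_sub_C, Polynomial.resultant_X_sub_C_left _ _ _ hg,
      Polynomial.natDegree_multiset_prod_X_sub_C_eq_card, ih, Multiset.map_cons,
      Multiset.prod_cons]

lemma det_eMatrix_eq_prod_sub (A B : Multiset R) {m n : ℕ} (hA : Multiset.card A = m)
    (hB : Multiset.card B = n) :
    (eMatrix A B 0 : Matrix (Fin (n + m)) (Fin (n + m)) R).det =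
      (A.map fun a => (B.map fun b => a - b).prod).prod := by
  rw [eMatrix_eq_submatrix_sylvester A B hA hB, Matrix.det_submatrix_equiv_self, ← hA,
    ← Polynomial.resultant, Polynomial.resultant_multiset_prod_X_sub_C_left]
  · simp [Polynomial.eval_multiset_prod, Multiset.map_map]
  · nontriviality R
    simp [hB]

theorem schurAB_append_add_card_eq_mul_prod_sub (A B : Multiset R) {m n h : ℕ}
    (hA : Multiset.card A = m) (hB : Multiset.card B = n) (I : Fin m → ℕ) (J : Fin h → ℕ) :
    schurAB A B (Fin.append J fun i => I i + n) =
      schurAB A 0 I * (A.map fun a => (B.map fun b => a - b).prod).prod * schurAB 0 B J := by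
  rw [schurAB_append_add_eq_mul A B hA.le hB.le,
    ← schurAB_zero_right_mul_det_eMatrix A B hA.le hB.le, det_eMatrix_eq_prod_sub A B hA hB]
  ring

end

theorem stmt_12_general (m n h : ℕ) (I : Fin m → ℕ) (J : Fin h → ℕ) :
    schurAB
        ((Finset.univ : Finset (Fin m)).val.map
          (fun i => (X (Sum.inl i) : MvPolynomial (Fin m ⊕ Fin n) ℤ)))
        ((Finset.univ : Finset (Fin n)).val.map (fun j => X (Sum.inr j)))
        (Fin.append J (fun i => I i + n)) =
      schurAB
          ((Finset.univ : Finset (Fin m)).val.map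
            (fun i => (X (Sum.inl i) : MvPolynomial (Fin m ⊕ Fin n) ℤ)))
          (0 : Multiset (MvPolynomial (Fin m ⊕ Fin n) ℤ)) I *
        (∏ i : Fin m, ∏ j : Fin n,
          ((X (Sum.inl i) : MvPolynomial (Fin m ⊕ Fin n) ℤ) - X (Sum.inr j))) *
        schurAB (0 : Multiset (MvPolynomial (Fin m ⊕ Fin n) ℤ))
          ((Finset.univ : Finset (Fin n)).val.map (fun j => X (Sum.inr j))) J := by
  rw [schurAB_append_add_card_eq_mul_prod_sub _ _ (by simp) (by simp)]
  simp [Function.comp_def, Finset.prod_eq_multiset_prod]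

/-- Factorization property: for partitions `I = (i₁,…,i_m)` and `J = (j₁,…,j_h)`
(weakly increasing) and alphabets `𝔸`, `𝔹` of `m`, `n` variables,
`S_{(j₁,…,j_h,i₁+n,…,i_m+n)}(𝔸−𝔹) = S_I(𝔸) · R(𝔸,𝔹) · S_J(−𝔹)`. -/
theorem stmt_12 (m n h : ℕ) (I : Fin m → ℕ) (J : Fin h → ℕ)
    (hI : Monotone I) (hJ : Monotone J) :
    schurAB
        ((Finset.univ : Finset (Fin m)).val.map
          (fun i => (X (Sum.inl i) : MvPolynomial (Fin m ⊕ Fin n) ℤ)))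
        ((Finset.univ : Finset (Fin n)).val.map (fun j => X (Sum.inr j)))
        (Fin.append J (fun i => I i + n)) =
      schurAB
          ((Finset.univ : Finset (Fin m)).val.map
            (fun i => (X (Sum.inl i) : MvPolynomial (Fin m ⊕ Fin n) ℤ)))
          (0 : Multiset (MvPolynomial (Fin m ⊕ Fin n) ℤ)) I *
        (∏ i : Fin m, ∏ j : Fin n,
          ((X (Sum.inl i) : MvPolynomial (Fin m ⊕ Fin n) ℤ) - X (Sum.inr j))) *
        schurAB (0 : Multiset (MvPolynomial (Fin m ⊕ Fin n) ℤ))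
          ((Finset.univ : Finset (Fin n)).val.map (fun j => X (Sum.inr j))) J :=
  stmt_12_general m n h I J
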